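/- arXiv:1508.07353 — 2 statements merged into one kernel-verified Lean document; each statement's English description precedes it below -/
import Mathlib

section
/- Let s(x) = c(x−a)(x−b) be a quadratic polynomial with real coefficients, where c > 0 and a ≤ b are real numbers, and define f(x) = x − 2s(x)/s′(x). Then f is nonincreasing on (b, ∞); that is, for all real numbers x, y with b < x ≤ y one has f(y) ≤ f(x). -/
/-!
Dividing out `c`, the map `z ↦ z - 2 s(z) / s'(z)` is the hyperbola
`(a + b) / 2 + (a - b)² / (2 (2z - a - b))`, which decreases on `z > (a + b) / 2`,
and `(b, ∞)` lies in that half-line because `a ≤ b`.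
-/

open Set

theorem sub_two_mul_quadratic_div_deriv_eq {c a b z : ℝ} (hc : c ≠ 0) (hz : 2 * z - a - b ≠ 0) :
    z - 2 * (c * (z - a) * (z - b)) / (c * (2 * z - a - b)) =
      (a + b) / 2 + (a - b) ^ 2 / (2 * (2 * z - a - b)) := by
  rw [eq_comm, ← sub_eq_zero]
  field_simp
  ring

theorem antitoneOn_add_sq_div_two_mul (a b : ℝ) :
    AntitoneOn (fun z => (a + b) / 2 + (a - b) ^ 2 / (2 * (2 * z - a - b))) (Ioi ((a + b) / 2)) := by
  intro x hx y _ hxy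
  have hx' : 0 < 2 * x - a - b := by rw [mem_Ioi] at hx; linarith
  dsimp only
  gcongr

/-- Monotonicity of `x - 2s(x)/s'(x)` above the roots of a real-rooted quadratic
(Lemma 3.8). -/
theorem stmt_4 (c a b : ℝ) (hc : 0 < c) (hab : a ≤ b) (x y : ℝ) (hx : b < x) (hxy : x ≤ y) :
    y - 2 * (c * (y - a) * (y - b)) / (c * (2 * y - a - b)) ≤
      x - 2 * (c * (x - a) * (x - b)) / (c * (2 * x - a - b)) := by
  have hx' : (a + b) / 2 < x := by linarith
  have hy' : (a + b) / 2 < y := by linarith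
  rw [sub_two_mul_quadratic_div_deriv_eq hc.ne' (by linarith),
    sub_two_mul_quadratic_div_deriv_eq hc.ne' (by linarith)]
  exact antitoneOn_add_sq_div_two_mul a b hx' hy' hxy
end

section
/- Let d ≥ 1 and let X_1, …, X_d, Y_1, …, Y_d be d×d matrices over ℂ. Define the mixed discriminant D(X_1,…,X_d) = Σ_{σ∈S_d} det(Y_σ(X_1,…,X_d)), where Y_σ(X_1,…,X_d) is the d×d matrix whose j-th column equals the j-th column of X_{σ(j)}. Then D(X_1,…,X_d) · D(Y_1,…,Y_d) = Σ_{π∈S_d} D(X_1 Y_{π(1)}, …, X_d Y_{π(d)}), where the sum is over all permutations π of {1,…,d}. -/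
open scoped BigOperators

/-- The mixed discriminant of `d × d` matrices `X₁, …, X_d`, normalized as a sum over the
symmetric group: `D(X₁,…,X_d) = ∑_{σ ∈ S_d} det (Y_σ)`, where the `j`-th column of `Y_σ`
is the `j`-th column of `X_{σ(j)}`. -/
noncomputable def mixedDisc {d : ℕ} (X : Fin d → Matrix (Fin d) (Fin d) ℂ) : ℂ :=
  ∑ σ : Equiv.Perm (Fin d), (Matrix.of fun i j => X (σ j) i j).det

namespace MixedDiscAux

open Finset Equiv Matrix

variable {d : ℕ}

/-- Sign of a permutation, as a complex number. -/
def E (τ : Equiv.Perm (Fin d)) : ℂ := ((Equiv.Perm.sign τ : ℤ) : ℂ)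

lemma E_mul (a b : Equiv.Perm (Fin d)) : E (a * b) = E a * E b := by
  simp [E]

lemma mixedDisc_eq (X : Fin d → Matrix (Fin d) (Fin d) ℂ) :
    mixedDisc X = ∑ σ : Equiv.Perm (Fin d), ∑ τ : Equiv.Perm (Fin d),
      E τ * ∏ j, X (σ j) (τ j) j := by
  unfold mixedDisc
  refine Finset.sum_congr rfl fun σ _ => ?_
  rw [Matrix.det_apply']
  rfl

/-- The inner double sum appearing in the expansion. -/
noncomputable def W (X : Fin d → Matrix (Fin d) (Fin d) ℂ) (f : Fin d → Fin d) : ℂ :=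
  ∑ σ : Equiv.Perm (Fin d), ∑ τ : Equiv.Perm (Fin d), E τ * ∏ j, X (σ j) (τ j) (f j)

lemma W_eq_zero (X : Fin d → Matrix (Fin d) (Fin d) ℂ) {f : Fin d → Fin d}
    (hf : ¬ Function.Bijective f) : W X f = 0 := by
  obtain ⟨a, b, hab, hne⟩ : ∃ a b, f a = f b ∧ a ≠ b := by
    rw [← Finite.injective_iff_bijective, Function.Injective] at hf
    push_neg at hf; exact hf
  set s := Equiv.swap a b with hs
  have key : ∀ σ τ : Equiv.Perm (Fin d),
      E (τ * s) * ∏ j, X ((σ * s) j) ((τ * s) j) (f j)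
        = - (E τ * ∏ j, X (σ j) (τ j) (f j)) := by
    intro σ τ
    have h1 : E (τ * s) = - E τ := by
      rw [E_mul]
      simp [E, hs, Equiv.Perm.sign_swap hne]
    have h2 : (∏ j, X ((σ * s) j) ((τ * s) j) (f j)) = ∏ j, X (σ j) (τ j) (f j) := by
      rw [← Equiv.prod_comp s (fun j => X (σ j) (τ j) (f j))]
      refine Finset.prod_congr rfl fun j _ => ?_
      rw [show f j = f (s j) from (Equiv.apply_swap_eq_self hab j).symm]
      rfl
    rw [h1, h2]; ring
  have hneg : W X f = - W X f := by
    conv_lhs => rw [W]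
    calc ∑ σ : Equiv.Perm (Fin d), ∑ τ : Equiv.Perm (Fin d), E τ * ∏ j, X (σ j) (τ j) (f j)
        = ∑ σ : Equiv.Perm (Fin d), ∑ τ : Equiv.Perm (Fin d),
            E (τ * s) * ∏ j, X ((σ * s) j) ((τ * s) j) (f j) := by
          refine (Fintype.sum_bijective (· * s) (Group.mulRight_bijective s)
            (fun σ => ∑ τ : Equiv.Perm (Fin d),
              E (τ * s) * ∏ j, X ((σ * s) j) ((τ * s) j) (f j))
            (fun σ => ∑ τ : Equiv.Perm (Fin d), E τ * ∏ j, X (σ j) (τ j) (f j))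
            fun σ => ?_).symm
          exact Fintype.sum_bijective (· * s) (Group.mulRight_bijective s)
            (fun τ => E (τ * s) * ∏ j, X ((σ * s) j) ((τ * s) j) (f j))
            (fun τ => E τ * ∏ j, X ((σ * s) j) (τ j) (f j))
            fun τ => rfl
      _ = ∑ σ : Equiv.Perm (Fin d), ∑ τ : Equiv.Perm (Fin d),
            - (E τ * ∏ j, X (σ j) (τ j) (f j)) := by
          exact Finset.sum_congr rfl fun σ _ => Finset.sum_congr rfl fun τ _ => key σ τ
      _ = - W X f := by rw [W]; simp
  have h2 : (2 : ℂ) * W X f = 0 := by linear_combination hneg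
  exact (mul_eq_zero.mp h2).resolve_left two_ne_zero

lemma mixedDisc_eq_W (X : Fin d → Matrix (Fin d) (Fin d) ℂ) :
    mixedDisc X = W X id := by
  rw [mixedDisc_eq]; rfl

lemma W_perm (X : Fin d → Matrix (Fin d) (Fin d) ℂ) (φ : Equiv.Perm (Fin d)) :
    W X ⇑φ = E φ * W X id := by
  rw [W, W, Finset.mul_sum]
  refine Fintype.sum_bijective (· * φ⁻¹) (Group.mulRight_bijective φ⁻¹)
    (fun σ => ∑ τ : Equiv.Perm (Fin d), E τ * ∏ j, X (σ j) (τ j) (φ j))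
    (fun σ => E φ * ∑ τ : Equiv.Perm (Fin d), E τ * ∏ j, X (σ j) (τ j) (id j))
    fun σ => ?_
  rw [Finset.mul_sum]
  refine Fintype.sum_bijective (· * φ⁻¹) (Group.mulRight_bijective φ⁻¹)
    (fun τ => E τ * ∏ j, X (σ j) (τ j) (φ j))
    (fun τ => E φ * (E τ * ∏ j, X ((σ * φ⁻¹) j) (τ j) (id j)))
    fun τ => ?_
  have hE : E τ = E (τ * φ⁻¹) * E φ := by
    rw [← E_mul, inv_mul_cancel_right]
  have hP : ∏ j, X (σ j) (τ j) (φ j)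
      = ∏ j, X ((σ * φ⁻¹) j) ((τ * φ⁻¹) j) (id j) := by
    rw [← Equiv.prod_comp φ (fun j => X ((σ * φ⁻¹) j) ((τ * φ⁻¹) j) (id j))]
    refine Finset.prod_congr rfl fun j _ => ?_
    simp [Equiv.Perm.mul_apply]
  show E τ * ∏ j, X (σ j) (τ j) (φ j)
      = E φ * (E (τ * φ⁻¹) * ∏ j, X ((σ * φ⁻¹) j) ((τ * φ⁻¹) j) (id j))
  rw [hE, hP]; ring

end MixedDiscAux

/-- Multiplication formula for mixed discriminants (Lemma 2.10). -/
theorem stmt_18 (d : ℕ) (hd : 1 ≤ d) (X Y : Fin d → Matrix (Fin d) (Fin d) ℂ) :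
    mixedDisc X * mixedDisc Y =
      ∑ π : Equiv.Perm (Fin d), mixedDisc (fun i => X i * Y (π i)) := by
  symm
  open Finset MixedDiscAux in
  calc
    ∑ π : Equiv.Perm (Fin d), mixedDisc (fun i => X i * Y (π i))
        = ∑ π : Equiv.Perm (Fin d), ∑ σ : Equiv.Perm (Fin d), ∑ τ : Equiv.Perm (Fin d),
            ∑ f : Fin d → Fin d, E τ *
              ∏ j, (X (σ j) (τ j) (f j) * Y (π (σ j)) (f j) j) := by
      simp only [mixedDisc_eq, Matrix.mul_apply, Finset.prod_univ_sum,
        Fintype.piFinset_univ, Finset.mul_sum]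
    _ = ∑ σ : Equiv.Perm (Fin d), ∑ ρ : Equiv.Perm (Fin d), ∑ τ : Equiv.Perm (Fin d),
            ∑ f : Fin d → Fin d, E τ *
              ∏ j, (X (σ j) (τ j) (f j) * Y (ρ j) (f j) j) := by
      rw [Finset.sum_comm]
      refine Finset.sum_congr rfl fun σ _ => ?_
      exact Fintype.sum_bijective (· * σ) (Group.mulRight_bijective σ)
        (fun π => ∑ τ : Equiv.Perm (Fin d), ∑ f : Fin d → Fin d,
          E τ * ∏ j, (X (σ j) (τ j) (f j) * Y (π (σ j)) (f j) j))
        (fun ρ => ∑ τ : Equiv.Perm (Fin d), ∑ f : Fin d → Fin d,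
          E τ * ∏ j, (X (σ j) (τ j) (f j) * Y (ρ j) (f j) j))
        fun π => rfl
    _ = ∑ ρ : Equiv.Perm (Fin d), ∑ σ : Equiv.Perm (Fin d), ∑ τ : Equiv.Perm (Fin d),
            ∑ f : Fin d → Fin d, E τ *
              ∏ j, (X (σ j) (τ j) (f j) * Y (ρ j) (f j) j) := Finset.sum_comm
    _ = ∑ ρ : Equiv.Perm (Fin d), ∑ σ : Equiv.Perm (Fin d), ∑ f : Fin d → Fin d,
            ∑ τ : Equiv.Perm (Fin d), E τ *
              ∏ j, (X (σ j) (τ j) (f j) * Y (ρ j) (f j) j) :=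
      Finset.sum_congr rfl fun ρ _ => Finset.sum_congr rfl fun σ _ => Finset.sum_comm
    _ = ∑ ρ : Equiv.Perm (Fin d), ∑ f : Fin d → Fin d, ∑ σ : Equiv.Perm (Fin d),
            ∑ τ : Equiv.Perm (Fin d), E τ *
              ∏ j, (X (σ j) (τ j) (f j) * Y (ρ j) (f j) j) :=
      Finset.sum_congr rfl fun ρ _ => Finset.sum_comm
    _ = ∑ f : Fin d → Fin d, ∑ ρ : Equiv.Perm (Fin d), ∑ σ : Equiv.Perm (Fin d),
            ∑ τ : Equiv.Perm (Fin d), E τ *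
              ∏ j, (X (σ j) (τ j) (f j) * Y (ρ j) (f j) j) := Finset.sum_comm
    _ = ∑ f : Fin d → Fin d, (∑ ρ : Equiv.Perm (Fin d), ∏ j, Y (ρ j) (f j) j) * W X f := by
      refine Finset.sum_congr rfl fun f _ => ?_
      rw [Finset.sum_mul]
      refine Finset.sum_congr rfl fun ρ _ => ?_
      rw [W, Finset.mul_sum]
      refine Finset.sum_congr rfl fun σ _ => ?_
      rw [Finset.mul_sum]
      refine Finset.sum_congr rfl fun τ _ => ?_
      rw [Finset.prod_mul_distrib]
      ring
    _ = ∑ f ∈ Finset.univ.filter Function.Bijective,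
          (∑ ρ : Equiv.Perm (Fin d), ∏ j, Y (ρ j) (f j) j) * W X f := by
      refine (Finset.sum_subset (Finset.filter_subset _ _) fun f _ hf => ?_).symm
      rw [W_eq_zero X (by simpa using hf), mul_zero]
    _ = ∑ φ : Equiv.Perm (Fin d),
          (∑ ρ : Equiv.Perm (Fin d), ∏ j, Y (ρ j) (φ j) j) * W X ⇑φ :=
      Finset.sum_bij (fun p h => Equiv.ofBijective p (Finset.mem_filter.1 h).2)
        (fun _ _ => Finset.mem_univ _) (fun _ _ _ _ h => by injection h)
        (fun b _ => ⟨b, Finset.mem_filter.2 ⟨Finset.mem_univ _, b.bijective⟩,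
          Equiv.coe_fn_injective rfl⟩) fun _ _ => rfl
    _ = mixedDisc X * ∑ φ : Equiv.Perm (Fin d), ∑ ρ : Equiv.Perm (Fin d),
          E φ * ∏ j, Y (ρ j) (φ j) j := by
      rw [mixedDisc_eq_W, Finset.mul_sum]
      refine Finset.sum_congr rfl fun φ _ => ?_
      rw [W_perm, Finset.mul_sum, Finset.sum_mul]
      refine Finset.sum_congr rfl fun ρ _ => ?_
      ring
    _ = mixedDisc X * mixedDisc Y := by
      rw [mixedDisc_eq Y, Finset.sum_comm]
end
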